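/- Univariate TCE for spherical (elliptical) variables: let Z have density f(z) = c·g(z²/2) with density generator g satisfying ∫₀^∞ g(u)du < ∞, and let M = m + s·Z with s > 0. Then for y_q with P(M > y_q) > 0, E[M | M > y_q] = m + s² · (c/s) · Ḡ(z_q²/2) / P(Z > z_q), where z_q = (y_q − m)/s and Ḡ(u) = ∫_u^∞ g(v)dv. -/

import Mathlib

/-!
Since `M = m + s Z`, the tail integral of `M` over `{M > y_q} = {Z > z_q}` is
`m · P(Z > z_q) + s · ∫_{Z > z_q} Z`, and the last integral is `c ∫_{z_q}^∞ z g(z²/2) dz`.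
The substitution `v = z²/2` turns it into `c Ḡ(z_q²/2)` when `z_q ≥ 0`; when `z_q < 0`, oddness of
the integrand gives `∫_{z_q}^∞ = ∫_{-z_q}^∞`, which reduces to the first case.
-/

open MeasureTheory Set

theorem Function.Odd.setIntegral_Ioi_eq_setIntegral_Ioi_neg {E : Type*} [NormedAddCommGroup E]
    [NormedSpace ℝ E] {h : ℝ → E} (hodd : Function.Odd h) (hint : Integrable h) (a : ℝ) :
    ∫ x in Ioi a, h x = ∫ x in Ioi (-a), h x := by
  have hneg : (fun x => h (-x)) = fun x => -h x := funext hodd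
  have hzero : ∫ x, h x = 0 := by
    have hsymm := integral_neg_eq_self h volume
    rw [hneg, integral_neg] at hsymm
    have htwice : (2 : ℝ) • ∫ x, h x = 0 := by
      rw [two_smul]; nth_rewrite 1 [← hsymm]; exact neg_add_cancel _
    simpa using htwice
  have hIic : ∫ x in Iic a, h x = -∫ x in Ioi (-a), h x := by
    rw [← integral_neg, ← hneg, integral_comp_neg_Ioi, neg_neg]
  have hsplit := integral_add_compl (measurableSet_Iic (a := a)) hint
  rw [compl_Iic, hIic, hzero] at hsplit
  exact (neg_add_eq_zero.mp hsplit).symm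

theorem image_sq_half_Ioi {a : ℝ} (ha : 0 ≤ a) :
    (fun z : ℝ => z ^ 2 / 2) '' Ioi a = Ioi (a ^ 2 / 2) := by
  ext v
  constructor
  · rintro ⟨z, hz, rfl⟩
    exact div_lt_div_of_pos_right (pow_lt_pow_left₀ hz ha two_ne_zero) two_pos
  · intro hv
    have hv' : a ^ 2 < 2 * v := by rw [mem_Ioi] at hv; linarith
    refine ⟨√(2 * v), (Real.lt_sqrt ha).mpr hv', ?_⟩
    change √(2 * v) ^ 2 / 2 = v
    rw [Real.sq_sqrt (by nlinarith)]
    ring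

theorem setIntegral_Ioi_comp_sq_half_mul_of_nonneg (G : ℝ → ℝ) {a : ℝ} (ha : 0 ≤ a) :
    ∫ z in Ioi a, G (z ^ 2 / 2) * z = ∫ v in Ioi (a ^ 2 / 2), G v := by
  have hderiv : ∀ x ∈ Ioi a, HasDerivWithinAt (fun z : ℝ => z ^ 2 / 2) x (Ioi a) x := by
    intro x _
    simpa using ((hasDerivAt_pow 2 x).div_const 2).hasDerivWithinAt
  have hinj : InjOn (fun z : ℝ => z ^ 2 / 2) (Ioi a) := fun x hx y hy hxy =>
    (pow_left_strictMonoOn₀ two_ne_zero).injOn (le_trans ha (le_of_lt hx))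
      (le_trans ha (le_of_lt hy)) (by simpa using hxy)
  rw [← image_sq_half_Ioi ha,
    integral_image_eq_integral_abs_deriv_smul measurableSet_Ioi hderiv hinj G]
  refine setIntegral_congr_fun measurableSet_Ioi fun x hx => ?_
  rw [abs_of_pos (lt_of_le_of_lt ha hx), smul_eq_mul, mul_comm]

theorem setIntegral_Ioi_comp_sq_half_mul {G : ℝ → ℝ}
    (hint : Integrable (fun z => G (z ^ 2 / 2) * z)) (a : ℝ) :
    ∫ z in Ioi a, G (z ^ 2 / 2) * z = ∫ v in Ioi (a ^ 2 / 2), G v := by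
  rcases le_total 0 a with ha | ha
  · exact setIntegral_Ioi_comp_sq_half_mul_of_nonneg G ha
  · have hodd : Function.Odd (fun z => G (z ^ 2 / 2) * z) := fun z => by
      simp only [neg_sq, mul_neg]
    rw [hodd.setIntegral_Ioi_eq_setIntegral_Ioi_neg hint,
      setIntegral_Ioi_comp_sq_half_mul_of_nonneg G (neg_nonneg.mpr ha), neg_sq]

section Density

variable {Ω : Type*} [MeasurableSpace Ω] {μ : Measure Ω} {X : Ω → ℝ} {ρ : ℝ → ℝ}

theorem integrable_mul_of_map_eq_withDensity (hX : AEMeasurable X μ) (hρm : Measurable ρ)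
    (hρ : ∀ x, 0 ≤ ρ x) (hmap : μ.map X = volume.withDensity (fun x => ENNReal.ofReal (ρ x)))
    (hXint : Integrable X μ) :
    Integrable (fun x => ρ x * x) := by
  have hid : Integrable (fun x : ℝ => x) (μ.map X) :=
    (integrable_map_measure aestronglyMeasurable_id hX).mpr hXint
  rw [hmap, integrable_withDensity_iff_integrable_smul' hρm.ennreal_ofReal
    (Filter.Eventually.of_forall fun _ => ENNReal.ofReal_lt_top)] at hid
  simpa only [ENNReal.toReal_ofReal (hρ _), smul_eq_mul] using hid

theorem setIntegral_preimage_of_map_eq_withDensity (hX : AEMeasurable X μ) (hρm : Measurable ρ)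
    (hρ : ∀ x, 0 ≤ ρ x) (hmap : μ.map X = volume.withDensity (fun x => ENNReal.ofReal (ρ x)))
    {s : Set ℝ} (hs : MeasurableSet s) :
    ∫ ω in X ⁻¹' s, X ω ∂μ = ∫ x in s, ρ x * x := by
  rw [← setIntegral_map (f := fun x => x) hs aestronglyMeasurable_id hX, hmap,
    restrict_withDensity hs,
    integral_withDensity_eq_integral_toReal_smul hρm.ennreal_ofReal
      (Filter.Eventually.of_forall fun _ => ENNReal.ofReal_lt_top)]
  simp only [ENNReal.toReal_ofReal (hρ _), smul_eq_mul]

end Density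

theorem tce_univariate_elliptical_general {Ω : Type*} [MeasurableSpace Ω]
    (μ : Measure Ω) [IsProbabilityMeasure μ] (g : ℝ → ℝ) (hgm : Measurable g)
    (hg_nonneg : ∀ u, 0 ≤ u → 0 ≤ g u)
    (c : ℝ) (hc : 0 < c)
    (Z : Ω → ℝ) (hZm : Measurable Z)
    (hZ : Measure.map Z μ
      = volume.withDensity (fun z => ENNReal.ofReal (c * g (z ^ 2 / 2))))
    (m s : ℝ) (hs : 0 < s) (M : Ω → ℝ) (hM : ∀ ω, M ω = m + s * Z ω)
    (hMint : Integrable M μ) (y_q : ℝ)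
    (hpos : 0 < (μ {ω | M ω > y_q}).toReal) :
    (∫ ω in {ω | M ω > y_q}, M ω ∂μ) / (μ {ω | M ω > y_q}).toReal
      = m + s ^ 2 * ((c / s) * (∫ v in Set.Ioi (((y_q - m) / s) ^ 2 / 2), g v)
            / (μ {ω | Z ω > (y_q - m) / s}).toReal) := by
  set z_q := (y_q - m) / s
  set S := Z ⁻¹' Ioi z_q
  have hset : {ω | M ω > y_q} = S := by
    ext ω
    simp only [mem_ofPred_eq, mem_preimage, mem_Ioi, hM, S, z_q, div_lt_iff₀ hs]
    constructor <;> intro h <;> linarith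
  have hZint : Integrable Z μ := by
    refine ((hMint.sub (integrable_const m)).div_const s).congr (ae_of_all _ fun ω => ?_)
    simp only [Pi.sub_apply, hM]
    field_simp
    ring
  have hρ : ∀ z, 0 ≤ c * g (z ^ 2 / 2) := fun z => mul_nonneg hc.le (hg_nonneg _ (by positivity))
  have hρm : Measurable fun z : ℝ => c * g (z ^ 2 / 2) := by fun_prop
  have htail : ∫ ω in S, Z ω ∂μ = c * ∫ v in Ioi (z_q ^ 2 / 2), g v := by
    rw [setIntegral_preimage_of_map_eq_withDensity hZm.aemeasurable hρm hρ hZ measurableSet_Ioi,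
      setIntegral_Ioi_comp_sq_half_mul (G := fun u => c * g u)
        (integrable_mul_of_map_eq_withDensity hZm.aemeasurable hρm hρ hZ hZint),
      integral_const_mul]
  have hnum : ∫ ω in S, M ω ∂μ = m * μ.real S + s * ∫ ω in S, Z ω ∂μ := by
    simp only [hM]
    rw [integral_add (integrable_const m) (hZint.const_mul s).integrableOn, setIntegral_const,
      integral_const_mul, smul_eq_mul, mul_comm]
  have hS : (μ S).toReal ≠ 0 := by rw [hset] at hpos; exact hpos.ne'
  change _ / _ = m + s ^ 2 * (c / s * _ / (μ S).toReal)
  rw [hset, hnum, htail, measureReal_def]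
  field_simp

theorem tce_univariate_elliptical {Ω : Type*} [MeasurableSpace Ω]
    (μ : Measure Ω) [IsProbabilityMeasure μ] (g : ℝ → ℝ) (hgm : Measurable g)
    (hg_nonneg : ∀ u, 0 ≤ u → 0 ≤ g u)
    (hg_int : IntegrableOn g (Set.Ioi 0))
    (hg_moment : IntegrableOn (fun u => u ^ (-(1:ℝ)/2) * g u) (Set.Ioi 0))
    (c : ℝ) (hc : 0 < c)
    (Z : Ω → ℝ) (hZm : Measurable Z)
    (hZ : Measure.map Z μ
      = volume.withDensity (fun z => ENNReal.ofReal (c * g (z ^ 2 / 2))))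
    (m s : ℝ) (hs : 0 < s) (M : Ω → ℝ) (hM : ∀ ω, M ω = m + s * Z ω)
    (hMint : Integrable M μ) (y_q : ℝ)
    (hpos : 0 < (μ {ω | M ω > y_q}).toReal) :
    (∫ ω in {ω | M ω > y_q}, M ω ∂μ) / (μ {ω | M ω > y_q}).toReal
      = m + s ^ 2 * ((c / s) * (∫ v in Set.Ioi (((y_q - m) / s) ^ 2 / 2), g v)
            / (μ {ω | Z ω > (y_q - m) / s}).toReal) :=
  tce_univariate_elliptical_general μ g hgm hg_nonneg c hc Z hZm hZ m s hs M hM hMint y_q hpos
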